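/- Let N ≥ 2, h = 1/N, m ≥ 1, and let C(β, z) = h·(1 + ∑_{k∈ℤ, N∤k} exp(2πik(hβ − z))·L(k)/k^{2m}) with L(k) = (∑_{γ∈ℤ} h^{2m}/(γ − kh)^{2m})^{−1}. Then the coefficients interpolate: for integers β, β' with 1 ≤ β, β' ≤ N, C(β, hβ') = δ_{ββ'} (Kronecker delta), i.e. C(β, hβ') = 1 if β = β' and 0 otherwise. -/

import Mathlib

/-- `L(k) = (∑_{γ ∈ ℤ} h^{2m}/(γ − kh)^{2m})⁻¹` with `h = 1/N`. -/
noncomputable def Lcoeff (N m : ℕ) (k : ℤ) : ℝ :=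
  (∑' γ : ℤ, ((1 : ℝ) / N) ^ (2 * m) / ((γ : ℝ) - (k : ℝ) / N) ^ (2 * m))⁻¹

/-- Optimal interpolation coefficient
`C(β,z) = h(1 + ∑_{k∈ℤ, N∤k} e^{2πik(hβ−z)} L(k)/k^{2m})`, `h = 1/N`. -/
noncomputable def Ccoeff (N m : ℕ) (β : ℕ) (z : ℝ) : ℂ :=
  (1 / (N : ℂ)) * (1 + ∑' k : {k : ℤ // ¬ (N : ℤ) ∣ k},
    Complex.exp (2 * Real.pi * Complex.I * ((k : ℤ) : ℂ) * (((β : ℝ) / N - z : ℝ) : ℂ)) *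
      (Lcoeff N m k : ℂ) / (((k : ℤ) : ℂ)) ^ (2 * m))


/-!
Write `k = tN + r` with `0 ≤ r < N`. Substituting `γ ↦ -t` shows `L(k)⁻¹ = ∑_t (tN + k)^{-2m}`,
which depends only on `r`; hence for each residue `r ≠ 0` the weights `L(k)/k^{2m}` over the class
of `r` sum to exactly `1`. With `ζ = exp(2πi(β - β')/N)` the phase `exp(2πik(hβ - hβ'))` is `ζ^k`,
which also depends only on `r`, so the absolutely convergent series collapses to `∑_{0<r<N} ζ^r`.
As `ζ` is an `N`-th root of unity, equal to `1` exactly when `β = β'`, this is `N δ_{ββ'} - 1`.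
-/

open Complex Finset

theorem geom_sum_eq_ite_of_pow_eq_one {K : Type*} [DivisionRing K] [DecidableEq K] {ζ : K} {n : ℕ}
    (hζ : ζ ^ n = 1) : ∑ i ∈ range n, ζ ^ i = if ζ = 1 then (n : K) else 0 := by
  split_ifs with h
  · simp [h]
  · rw [geom_sum_eq h, hζ, sub_self, zero_div]

section Lcoeff

variable {N m : ℕ}

theorem summable_one_div_mul_add_pow (hN : N ≠ 0) (hm : 1 ≤ m) (k : ℤ) :
    Summable fun t : ℤ => 1 / (((t * N + k : ℤ) : ℝ)) ^ (2 * m) := by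
  have hinj : Function.Injective fun t : ℤ => t * N + k := fun a b hab =>
    mul_right_cancel₀ (Int.natCast_ne_zero.mpr hN) (add_right_cancel hab)
  exact (Real.summable_one_div_int_pow.mpr (by omega)).comp_injective hinj

theorem Lcoeff_eq_inv_tsum (hN : N ≠ 0) (k : ℤ) :
    Lcoeff N m k = (∑' t : ℤ, 1 / (((t * N + k : ℤ) : ℝ)) ^ (2 * m))⁻¹ := by
  rw [Lcoeff, ← (Equiv.neg ℤ).tsum_eq]
  congr 1
  refine tsum_congr fun t => ?_
  have hNR : (N : ℝ) ≠ 0 := by exact_mod_cast hN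
  have h : ((-t : ℤ) : ℝ) - k / N = -(((t * N + k : ℤ) : ℝ) / N) := by
    push_cast; field_simp; ring
  rw [Equiv.neg_apply, h, (even_two_mul m).neg_pow, div_pow, div_pow, div_div_div_cancel_right₀
    (pow_ne_zero _ hNR), one_pow]

theorem Lcoeff_nonneg (k : ℤ) : 0 ≤ Lcoeff N m k :=
  inv_nonneg.mpr <| tsum_nonneg fun _ => div_nonneg ((even_two_mul m).pow_nonneg _)
    ((even_two_mul m).pow_nonneg _)

theorem Lcoeff_periodic (hN : N ≠ 0) : Function.Periodic (Lcoeff N m) N := fun k => by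
  rw [Lcoeff_eq_inv_tsum hN, Lcoeff_eq_inv_tsum hN,
    ← (Equiv.addRight (1 : ℤ)).tsum_eq fun t => 1 / (((t * N + k : ℤ) : ℝ)) ^ (2 * m)]
  simp only [Equiv.coe_addRight, add_mul, one_mul, add_assoc, add_comm (N : ℤ)]

theorem one_div_pow_le_tsum (hN : N ≠ 0) (hm : 1 ≤ m) (k : ℤ) :
    1 / (k : ℝ) ^ (2 * m) ≤ ∑' t : ℤ, 1 / (((t * N + k : ℤ) : ℝ)) ^ (2 * m) := by
  simpa using (summable_one_div_mul_add_pow hN hm k).le_tsum 0 fun t _ =>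
    div_nonneg zero_le_one ((even_two_mul m).pow_nonneg _)

theorem Lcoeff_le_pow (hN : N ≠ 0) (hm : 1 ≤ m) {k : ℤ} (hk : k ≠ 0) :
    Lcoeff N m k ≤ (k : ℝ) ^ (2 * m) := by
  have hpos : 0 < 1 / (k : ℝ) ^ (2 * m) :=
    one_div_pos.mpr ((even_two_mul m).pow_pos (Int.cast_ne_zero.mpr hk))
  simpa [Lcoeff_eq_inv_tsum hN] using inv_anti₀ hpos (one_div_pow_le_tsum hN hm k)

theorem Lcoeff_le (hN : N ≠ 0) (hm : 1 ≤ m) {k : ℤ} (hk : ¬ (N : ℤ) ∣ k) :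
    Lcoeff N m k ≤ (N : ℝ) ^ (2 * m) := by
  have hN' : (0 : ℤ) < N := by omega
  have hmod : k % N ≠ 0 := fun h => hk (Int.dvd_of_emod_eq_zero h)
  have hL : Lcoeff N m k = Lcoeff N m (k % N) := by
    simpa [mul_comm, Int.emod_add_mul_ediv] using (Lcoeff_periodic hN).int_mul (k / N) (k % N)
  rw [hL]
  refine (Lcoeff_le_pow hN hm hmod).trans (pow_le_pow_left₀ ?_ ?_ _)
  · exact_mod_cast Int.emod_nonneg k hN'.ne'
  · exact_mod_cast (Int.emod_lt_of_pos k hN').le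

theorem hasSum_Lcoeff_div_pow (hN : N ≠ 0) (hm : 1 ≤ m) {r : ℤ} (hr : r ≠ 0) :
    HasSum (fun t : ℤ => Lcoeff N m (t * N + r) / (((t * N + r : ℤ) : ℝ)) ^ (2 * m)) 1 := by
  set S := ∑' t : ℤ, 1 / (((t * N + r : ℤ) : ℝ)) ^ (2 * m)
  have hS : 0 < S := (one_div_pos.mpr ((even_two_mul m).pow_pos (Int.cast_ne_zero.mpr hr))).trans_le
    (one_div_pow_le_tsum hN hm r)
  have hL : ∀ t : ℤ, Lcoeff N m (t * N + r) = S⁻¹ := fun t => by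
    rw [← Lcoeff_eq_inv_tsum hN, add_comm]
    simpa using (Lcoeff_periodic hN).int_mul t r
  have h := (summable_one_div_mul_add_pow hN hm r).hasSum.mul_left S⁻¹
  rw [inv_mul_cancel₀ hS.ne'] at h
  simpa only [hL, div_eq_mul_one_div S⁻¹] using h

theorem summable_zpow_mul_Lcoeff_div_pow (hN : N ≠ 0) (hm : 1 ≤ m) {ζ : ℂ} (hζ : ‖ζ‖ = 1) :
    Summable fun k : {k : ℤ // ¬ (N : ℤ) ∣ k} => ζ ^ (k : ℤ) * Lcoeff N m k / (k : ℂ) ^ (2 * m) := by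
  refine Summable.of_norm_bounded
    (((Real.summable_one_div_int_pow (p := 2 * m)).mpr (by omega)).subtype _ |>.mul_left
      ((N : ℝ) ^ (2 * m)))
    fun k => ?_
  rw [norm_div, norm_mul, norm_zpow, hζ, one_zpow, one_mul, Complex.norm_real,
    Real.norm_of_nonneg (Lcoeff_nonneg _), norm_pow, Complex.norm_intCast, (even_two_mul m).pow_abs,
    Function.comp_apply, mul_one_div]
  exact div_le_div_of_nonneg_right (Lcoeff_le hN hm k.2) ((even_two_mul m).pow_nonneg _)

theorem hasSum_zpow_mul_Lcoeff_div_pow_residue (hN : N ≠ 0) (hm : 1 ≤ m) {ζ : ℂ}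
    (hζ : ζ ^ N = 1) {r : ℤ} (hr : r ≠ 0) :
    HasSum (fun t : ℤ => ζ ^ (t * N + r) * Lcoeff N m (t * N + r) / ((t * N + r : ℤ) : ℂ) ^ (2 * m))
      (ζ ^ r) := by
  have hζ0 : ζ ≠ 0 := by rintro rfl; simp [hN] at hζ
  have hpow : ∀ t : ℤ, ζ ^ (t * N + r) = ζ ^ r := fun t => by
    rw [zpow_add₀ hζ0, mul_comm t, zpow_mul, zpow_natCast, hζ, one_zpow, one_mul]
  have h := (hasSum_ofReal.mpr (hasSum_Lcoeff_div_pow hN hm hr)).mul_left (ζ ^ r)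
  rw [ofReal_one, mul_one] at h
  simpa only [hpow, ofReal_div, ofReal_pow, ofReal_intCast, mul_div_assoc] using h

theorem hasSum_zpow_mul_Lcoeff_div_pow (hN : N ≠ 0) (hm : 1 ≤ m) {ζ : ℂ} (hζ : ζ ^ N = 1) :
    HasSum (fun k : {k : ℤ // ¬ (N : ℤ) ∣ k} => ζ ^ (k : ℤ) * Lcoeff N m k / (k : ℂ) ^ (2 * m))
      (∑ i ∈ range N, ζ ^ i - 1) := by
  have : NeZero N := ⟨hN⟩
  set f : ℤ → ℂ := fun k => ζ ^ k * Lcoeff N m k / (k : ℂ) ^ (2 * m)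
  set s : Set ℤ := {k | ¬ (N : ℤ) ∣ k}
  have hsum : Summable (s.indicator f) := summable_subtype_iff_indicator.mp
    (summable_zpow_mul_Lcoeff_div_pow hN hm (norm_eq_one_of_pow_eq_one hζ hN))
  let e : Fin N × ℤ ≃ ℤ := (Equiv.prodComm _ _).trans (Int.divModEquiv N).symm
  have hfiber (r : Fin N) : HasSum (fun t => s.indicator f (e (r, t)))
      (ζ ^ (r : ℕ) - if (r : ℕ) = 0 then 1 else 0) := by
    have he : ∀ t, e (r, t) = t * N + r := fun t => rfl
    by_cases hr : (r : ℕ) = 0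
    · simp [he, hr, s]
    · have hmem : ∀ t : ℤ, t * N + r ∈ s := fun t hdvd => hr <| by
        exact_mod_cast Int.eq_zero_of_dvd_of_nonneg_of_lt (Int.natCast_nonneg r)
          (by exact_mod_cast r.2) ((dvd_add_right (dvd_mul_left _ _)).mp hdvd)
      simpa [he, hmem, hr, f] using
        hasSum_zpow_mul_Lcoeff_div_pow_residue hN hm hζ (r := r) (by exact_mod_cast hr)
  have htotal := ((e.hasSum_iff.mpr hsum.hasSum).prod_fiberwise hfiber).unique (hasSum_fintype _)
  rw [Fin.sum_univ_eq_sum_range (fun i => ζ ^ i - if i = 0 then 1 else 0), sum_sub_distrib,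
    sum_ite_eq' _ _ (fun _ => (1 : ℂ)), if_pos (mem_range.mpr (Nat.pos_of_ne_zero hN))] at htotal
  rw [← htotal]
  exact hasSum_subtype_iff_indicator.mpr hsum.hasSum

end Lcoeff

theorem Ccoeff_interpolates_general (N m : ℕ) (hm : 1 ≤ m) (β β' : ℕ)
    (hβ : β ∈ Finset.Icc 1 N) (hβ' : β' ∈ Finset.Icc 1 N) :
    Ccoeff N m β ((β' : ℝ) / N) = if β = β' then 1 else 0 := by
  rw [Finset.mem_Icc] at hβ hβ'
  have hN : N ≠ 0 := by omega
  have hω := Complex.isPrimitiveRoot_exp N hN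
  set ζ := exp (2 * Real.pi * I / N) ^ ((β : ℤ) - β')
  have hζN : ζ ^ N = 1 := by
    rw [← zpow_natCast, ← zpow_mul, hω.zpow_eq_one_iff_dvd]
    exact dvd_mul_left _ _
  have hζ : ζ = 1 ↔ β = β' := by
    rw [hω.zpow_eq_one_iff_dvd]
    refine ⟨fun h => ?_, fun h => by simp [h]⟩
    have := Int.eq_zero_of_abs_lt_dvd h (abs_lt.mpr ⟨by omega, by omega⟩)
    omega
  have hexp : ∀ k : ℤ, exp (2 * Real.pi * I * k * ((β / N - β' / N : ℝ) : ℂ)) = ζ ^ k := fun k => by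
    rw [← zpow_mul, ← exp_int_mul]
    congr 1
    push_cast
    ring
  rw [Ccoeff]
  simp only [hexp, (hasSum_zpow_mul_Lcoeff_div_pow hN hm hζN).tsum_eq,
    geom_sum_eq_ite_of_pow_eq_one hζN, hζ]
  split_ifs <;> field_simp <;> ring

theorem Ccoeff_interpolates (N m : ℕ) (hN : 2 ≤ N) (hm : 1 ≤ m) (β β' : ℕ)
    (hβ : β ∈ Finset.Icc 1 N) (hβ' : β' ∈ Finset.Icc 1 N) :
    Ccoeff N m β ((β' : ℝ) / N) = if β = β' then 1 else 0 :=
  Ccoeff_interpolates_general N m hm β β' hβ hβ'
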